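/- If U_j's group is 𝒢_w with secret a_w ≠ a_z (and e_j·b_i ≢ 0 mod q), then the verifier's recomputed exponent (a_z·e_j + k_j)·b_i differs from the actual exponent (a_w·e_j + k_j)·b_i modulo q, hence ({y_z}^{e_j}·Y_j)^{b_i} ≠ B_i^{s_j} in (ℤ/pℤ)*, so an honest member of a different group fails the group-membership check (before hashing). -/
import Mathlib


/-- A member of a different group (secret a_w ≠ a_z) fails the group-membership
    check before hashing: the exponents differ mod q and the group elements differ. -/
theorem prif_wrong_group_fails (p q : ℕ) [Fact p.Prime] [Fact q.Prime]
    (hq : q ∣ p - 1) (α : (ZMod p)ˣ) (hα : orderOf α = q)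
    (az aw kj ej bi : ZMod q)
    (yz Yj Bi : (ZMod p)ˣ)
    (hyz : yz = α ^ az.val) (hYj : Yj = α ^ kj.val) (hBi : Bi = α ^ bi.val)
    (sj : ZMod q) (hsj : sj = aw * ej + kj)
    (hne : aw ≠ az) (hnz : ej * bi ≠ 0) :
    (az * ej + kj) * bi ≠ (aw * ej + kj) * bi ∧
    (yz ^ ej.val * Yj) ^ bi.val ≠ Bi ^ sj.val := by
  have hexp : (az * ej + kj) * bi ≠ (aw * ej + kj) * bi := by
    intro h
    apply hne
    have h2 : (az - aw) * (ej * bi) = 0 := by ring_nf; linear_combination h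
    rcases mul_eq_zero.mp h2 with h3 | h3
    · exact (sub_eq_zero.mp h3).symm
    · exact absurd h3 hnz
  refine ⟨hexp, ?_⟩
  intro h
  apply hexp
  have hcalc : (yz ^ ej.val * Yj) ^ bi.val = α ^ ((az.val * ej.val + kj.val) * bi.val) := by
    rw [hyz, hYj, ← pow_mul, ← pow_add, ← pow_mul]
  have hBi2 : Bi ^ sj.val = α ^ (bi.val * sj.val) := by rw [hBi, ← pow_mul]
  rw [hcalc, hBi2, pow_eq_pow_iff_modEq, hα] at h
  have h' : ((az.val * ej.val + kj.val) * bi.val : ZMod q)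
      = ((bi.val * sj.val : ℕ) : ZMod q) := by exact_mod_cast (ZMod.natCast_eq_natCast_iff _ _ _).mpr h
  push_cast [ZMod.natCast_val, ZMod.cast_id] at h'
  rw [h', hsj]
  ring
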